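/- arXiv:1905.03170 — 4 statements merged into one kernel-verified Lean document; each statement's English description precedes it below -/
import Mathlib

section
/- For b ≥ 2, let Ω_b be the 4b × 4b matrix over ℤ/p given in 2b×2b blocks by [[L_b, J_b],[J_b, M_b]], where L_b, M_b, J_b are block-diagonal with 2×2 blocks [[0, λⱼ],[−λⱼ, 0]], [[0, μⱼ],[−μⱼ, 0]], and [[0, −1],[1, 0]] respectively, for scalars λ₁,…,λ_b, μ₁,…,μ_b ∈ ℤ/p. Then det Ω_b = (1 − λ₁μ₁)² (1 − λ₂μ₂)² ⋯ (1 − λ_bμ_b)². In particular, Ω_b is invertible if and only if λⱼμⱼ ≠ 1 for all j. -/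
open Matrix

lemma det4_aux {R : Type*} [CommRing R] (a c : R) :
    (fromBlocks !![0, a; -a, 0] !![0, -1; 1, 0] !![0, -1; 1, 0] !![0, c; -c, 0]).det
      = (1 - a * c) ^ 2 := by
  rw [← Matrix.det_submatrix_equiv_self (finSumFinEquiv (m := 2) (n := 2)).symm]
  have : (fromBlocks !![0, a; -a, 0] !![0, -1; 1, 0] !![0, -1; 1, 0] !![0, c; -c, 0]).submatrix
      (finSumFinEquiv (m := 2) (n := 2)).symm (finSumFinEquiv (m := 2) (n := 2)).symm
      = !![0, a, 0, -1; -a, 0, 1, 0; 0, -1, 0, c; 1, 0, -c, 0] := by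
    ext i j
    fin_cases i <;> fin_cases j <;>
      norm_num [fromBlocks, finSumFinEquiv, Fin.addCases, Fin.castLT, Fin.subNat]
  rw [this]
  simp [Matrix.det_succ_row_zero, Fin.sum_univ_succ, Fin.succAbove]
  ring

theorem stmt_9 (p b : ℕ) (hp : p.Prime) (hb : 2 ≤ b) (lam mu : Fin b → ZMod p) :
    let L := Matrix.blockDiagonal (fun j : Fin b => !![0, lam j; -lam j, 0])
    let M := Matrix.blockDiagonal (fun j : Fin b => !![0, mu j; -mu j, 0])
    let J := Matrix.blockDiagonal (fun _ : Fin b => !![0, -1; (1 : ZMod p), 0])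
    (Matrix.fromBlocks L J J M).det = ∏ j, (1 - lam j * mu j) ^ 2 ∧
    ((Matrix.fromBlocks L J J M).det ≠ 0 ↔ ∀ j, lam j * mu j ≠ 1) := by
  intro L M J
  haveI : Fact p.Prime := ⟨hp⟩
  have key : (Matrix.fromBlocks L J J M).det = ∏ j, (1 - lam j * mu j) ^ 2 := by
    rw [← Matrix.det_submatrix_equiv_self (Equiv.sumProdDistrib (Fin 2) (Fin 2) (Fin b))]
    have : (Matrix.fromBlocks L J J M).submatrix (Equiv.sumProdDistrib (Fin 2) (Fin 2) (Fin b))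
        (Equiv.sumProdDistrib (Fin 2) (Fin 2) (Fin b))
        = Matrix.blockDiagonal (fun j : Fin b =>
            Matrix.fromBlocks !![0, lam j; -lam j, 0] !![0, -1; 1, 0] !![0, -1; 1, 0]
              !![0, mu j; -mu j, 0]) := by
      ext ⟨i, j⟩ ⟨i', j'⟩
      rcases i with i | i <;> rcases i' with i' | i' <;>
        simp [L, M, J, Matrix.blockDiagonal_apply, Matrix.fromBlocks, Equiv.sumProdDistrib]
    rw [this, Matrix.det_blockDiagonal]
    exact Finset.prod_congr rfl fun j _ => det4_aux _ _
  refine ⟨key, ?_⟩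
  rw [key]
  rw [Finset.prod_ne_zero_iff]
  constructor
  · intro h j
    have := h j (Finset.mem_univ j)
    intro hc
    simp [hc] at this
  · intro h j _
    exact pow_ne_zero _ (sub_ne_zero.mpr fun hc => h j hc.symm)
end

section
/- Let p ≥ 5 be a prime and b ≥ 2 an integer. Then there exist non-zero elements λ₁,…,λ_b, μ₁,…,μ_b ∈ ℤ/p such that λ₁ + ⋯ + λ_b = 1, μ₁ + ⋯ + μ_b = 1, and λⱼμⱼ ≠ 1 for all j ∈ {1,…,b}. -/
/-!
Two summands carry all the work: choose `x ∉ {0, s}` and then `u ∉ {0, t, x⁻¹, t - (s - x)⁻¹}`,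
which is possible as soon as the field has at least five elements; then `(x, s - x)` and
`(u, t - u)` are nonzero splittings of `s` and `t` whose coordinatewise products differ from `1`.
Further summands are added as pairs `(1, d)` with `d ∉ {0, 1}`, shifting the targets `s` and `t`.
-/

theorem Finset.exists_notMem_of_card_le_of_lt_enatCard {α : Type*} {k : ℕ}
    (hk : (k : ℕ∞) < ENat.card α) (S : Finset α) (hS : S.card ≤ k) : ∃ x, x ∉ S := by
  cases finite_or_infinite α
  · have := Fintype.ofFinite α
    rw [ENat.card_eq_coe_fintype_card, Nat.cast_lt, ← Finset.card_univ] at hk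
    obtain ⟨x, -, hx⟩ := Finset.exists_mem_notMem_of_card_lt_card (hS.trans_lt hk)
    exact ⟨x, hx⟩
  · exact S.exists_notMem

section

open scoped Classical

variable {F : Type*} [Field F]

theorem exists_two_nonzero_summands_mul_ne_one (hF : 4 < ENat.card F) (s t : F) :
    ∃ lam mu : Fin 2 → F,
      (∀ j, lam j ≠ 0) ∧ (∀ j, mu j ≠ 0) ∧
      (∑ j, lam j) = s ∧ (∑ j, mu j) = t ∧
      ∀ j, lam j * mu j ≠ 1 := by
  obtain ⟨x, hx⟩ := Finset.exists_notMem_of_card_le_of_lt_enatCard (k := 2)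
    (lt_trans (by norm_num) hF) {0, s} Finset.card_le_two
  obtain ⟨u, hu⟩ := Finset.exists_notMem_of_card_le_of_lt_enatCard (k := 4) hF
    {0, t, x⁻¹, t - (s - x)⁻¹} Finset.card_le_four
  simp only [Finset.mem_insert, Finset.mem_singleton, not_or] at hx hu
  obtain ⟨hx0, hxs⟩ := hx
  obtain ⟨hu0, hut, hux, hus⟩ := hu
  refine ⟨![x, s - x], ![u, t - u], ?_, ?_, by simp, by simp, ?_⟩
  · simp only [Fin.forall_fin_two, Matrix.cons_val_zero, Matrix.cons_val_one]
    exact ⟨hx0, sub_ne_zero.mpr (Ne.symm hxs)⟩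
  · simp only [Fin.forall_fin_two, Matrix.cons_val_zero, Matrix.cons_val_one]
    exact ⟨hu0, sub_ne_zero.mpr (Ne.symm hut)⟩
  · simp only [Fin.forall_fin_two, Matrix.cons_val_zero, Matrix.cons_val_one]
    refine ⟨fun h => hux (eq_inv_of_mul_eq_one_right h), fun h => hus ?_⟩
    rw [← eq_inv_of_mul_eq_one_right h, sub_sub_cancel]

theorem exists_nonzero_summands_mul_ne_one (hF : 4 < ENat.card F) {n : ℕ} (hn : 2 ≤ n)
    (s t : F) :
    ∃ lam mu : Fin n → F,
      (∀ j, lam j ≠ 0) ∧ (∀ j, mu j ≠ 0) ∧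
      (∑ j, lam j) = s ∧ (∑ j, mu j) = t ∧
      ∀ j, lam j * mu j ≠ 1 := by
  induction n, hn using Nat.le_induction generalizing s t with
  | base => exact exists_two_nonzero_summands_mul_ne_one hF s t
  | succ n _ ih =>
    obtain ⟨d, hd⟩ := Finset.exists_notMem_of_card_le_of_lt_enatCard (k := 2)
      (lt_trans (by norm_num) hF) {0, 1} Finset.card_le_two
    simp only [Finset.mem_insert, Finset.mem_singleton, not_or] at hd
    obtain ⟨hd0, hd1⟩ := hd
    obtain ⟨lam, mu, hlam, hmu, hlam_sum, hmu_sum, hmul⟩ := ih (s - 1) (t - d)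
    refine ⟨Fin.cons 1 lam, Fin.cons d mu, Fin.cases one_ne_zero hlam, Fin.cases hd0 hmu,
      ?_, ?_, Fin.cases (by rwa [Fin.cons_zero, Fin.cons_zero, one_mul]) hmul⟩
    · rw [Fin.sum_cons, hlam_sum, add_sub_cancel]
    · rw [Fin.sum_cons, hmu_sum, add_sub_cancel]

end

theorem stmt_10 (p b : ℕ) (hp : p.Prime) (hp5 : 5 ≤ p) (hb : 2 ≤ b) :
    ∃ lam mu : Fin b → ZMod p,
      (∀ j, lam j ≠ 0) ∧ (∀ j, mu j ≠ 0) ∧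
      (∑ j, lam j) = 1 ∧ (∑ j, mu j) = 1 ∧
      ∀ j, lam j * mu j ≠ 1 := by
  have : Fact p.Prime := ⟨hp⟩
  have hcard : 4 < ENat.card (ZMod p) := by
    rw [ENat.card_eq_coe_fintype_card, ZMod.card]
    exact_mod_cast hp5
  exact exists_nonzero_summands_mul_ne_one hcard hb 1 1
end

section
/- For a prime p and integer b ≥ 2 with p ≥ 5, the integer σ(b, p) = (1/3)(2b−2) p^(4b−1) (p² − 1) is divisible by 16, and its minimum over all such pairs (b, p) is attained exactly at (b, p) = (2, 5), where σ(2, 5) = 2⁴ · 5⁷. -/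
/-! Since `p ≥ 5` is prime, `p` is prime to 6, so `24 ∣ p² - 1`. Hence
`σ(b, p) = 16 · (b - 1) · p ^ (4b - 1) · (p² - 1)/24`, and each of the three factors after the 16
is smallest, and the middle one strictly so, at `(b, p) = (2, 5)`. -/

theorem Nat.twentyFour_dvd_sq_sub_one {n : ℕ} (h2 : ¬2 ∣ n) (h3 : ¬3 ∣ n) :
    24 ∣ n ^ 2 - 1 := by
  have hsq : n ^ 2 % 24 = (n % 24) ^ 2 % 24 := Nat.pow_mod n 2 24
  have hr : n % 24 < 24 := Nat.mod_lt n (by norm_num)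
  have hpos : 1 ≤ n ^ 2 := Nat.one_le_pow _ _ (by omega)
  interval_cases h : n % 24 <;> omega

theorem Nat.Prime.twentyFour_dvd_sq_sub_one {p : ℕ} (hp : p.Prime) (hp5 : 5 ≤ p) :
    24 ∣ p ^ 2 - 1 :=
  Nat.twentyFour_dvd_sq_sub_one
    (fun h => by have := (Nat.prime_dvd_prime_iff_eq Nat.prime_two hp).mp h; omega)
    (fun h => by have := (Nat.prime_dvd_prime_iff_eq Nat.prime_three hp).mp h; omega)

theorem five_pow_seven_le_pow {p b : ℕ} (hp5 : 5 ≤ p) (hb : 2 ≤ b) :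
    5 ^ 7 ≤ p ^ (4 * b - 1) :=
  calc 5 ^ 7 ≤ p ^ 7 := Nat.pow_le_pow_left hp5 7
    _ ≤ p ^ (4 * b - 1) := Nat.pow_le_pow_right (by omega) (by omega)

theorem pow_eq_five_pow_seven_iff {p b : ℕ} (hp5 : 5 ≤ p) (hb : 2 ≤ b) :
    p ^ (4 * b - 1) = 5 ^ 7 ↔ b = 2 ∧ p = 5 := by
  refine ⟨fun h => ?_, by rintro ⟨rfl, rfl⟩; rfl⟩
  obtain rfl : p = 5 := by
    by_contra hne
    have : 5 ^ 7 < p ^ 7 := Nat.pow_lt_pow_left (by omega) (by norm_num)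
    have : p ^ 7 ≤ p ^ (4 * b - 1) := Nat.pow_le_pow_right (by omega) (by omega)
    omega
  have := Nat.pow_right_injective (by norm_num : 2 ≤ 5) h
  omega

theorem signature_numerator_eq {p b k : ℕ} (hk : p ^ 2 - 1 = 24 * k) :
    (2 * b - 2) * p ^ (4 * b - 1) * (p ^ 2 - 1) = 3 * (16 * ((b - 1) * p ^ (4 * b - 1) * k)) := by
  rw [hk, show 2 * b - 2 = 2 * (b - 1) by omega]
  ring

theorem stmt_16 (p b : ℕ) (hp : p.Prime) (hp5 : 5 ≤ p) (hb : 2 ≤ b) :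
    3 ∣ (2 * b - 2) * p ^ (4 * b - 1) * (p ^ 2 - 1) ∧
    16 ∣ (2 * b - 2) * p ^ (4 * b - 1) * (p ^ 2 - 1) / 3 ∧
    (2 * 2 - 2) * 5 ^ (4 * 2 - 1) * (5 ^ 2 - 1) / 3 ≤
      (2 * b - 2) * p ^ (4 * b - 1) * (p ^ 2 - 1) / 3 ∧
    ((2 * b - 2) * p ^ (4 * b - 1) * (p ^ 2 - 1) / 3 =
        (2 * 2 - 2) * 5 ^ (4 * 2 - 1) * (5 ^ 2 - 1) / 3 ↔ b = 2 ∧ p = 5) ∧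
    (2 * 2 - 2) * 5 ^ (4 * 2 - 1) * (5 ^ 2 - 1) / 3 = 2 ^ 4 * 5 ^ 7 := by
  obtain ⟨k, hk⟩ := hp.twentyFour_dvd_sq_sub_one hp5
  have hk1 : 1 ≤ k := by
    have : 5 ^ 2 ≤ p ^ 2 := Nat.pow_le_pow_left hp5 2
    omega
  have hnum := signature_numerator_eq (b := b) hk
  have hσ : (2 * b - 2) * p ^ (4 * b - 1) * (p ^ 2 - 1) / 3 =
      16 * ((b - 1) * p ^ (4 * b - 1) * k) := by
    rw [hnum, Nat.mul_div_cancel_left _ three_pos]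
  have hσ₀ : (2 * 2 - 2) * 5 ^ (4 * 2 - 1) * (5 ^ 2 - 1) / 3 = 16 * 5 ^ 7 := by norm_num
  have hx := five_pow_seven_le_pow hp5 hb
  have hle : p ^ (4 * b - 1) ≤ (b - 1) * p ^ (4 * b - 1) * k := by
    calc p ^ (4 * b - 1) = 1 * p ^ (4 * b - 1) * 1 := by ring
      _ ≤ _ := by gcongr; omega
  refine ⟨⟨_, hnum⟩, ⟨_, hσ⟩, by omega, ⟨fun h => ?_, by rintro ⟨rfl, rfl⟩; rfl⟩, by norm_num⟩
  exact (pow_eq_five_pow_seven_iff hp5 hb).mp (by omega)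
end

section
/- For primes p and integers b ≥ 2 with p dividing b + 1, define σ°(b, p) = (1/3)(2b−2) p^(2b−1)(p² − 1). Then σ°(b, p) is a positive integer divisible by 16, and the minimum of σ°(b, p) over all admissible pairs (b, p) is 128, attained at (b, p) = (3, 2). -/
/-!
`3σ°(b, p)` is divisible by `3` because `p (p² - 1)` is a product of three consecutive integers,
and by `16` because `2 ∣ 2b - 2` while `8` divides `p³` or `p² - 1` according to the parity of `p`.
It is monotone in both `b` and `p`; for `p = 2` the condition `2 ∣ b + 1` forces `b ≥ 3`, so the
minimum is at `(3, 2)`, and for `p ≥ 3` it is already at least `3σ°(2, 3) = 432`.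
-/

/-- `3 σ°(b, p)`, so that no division is needed. -/
def sigmaNumerator (b p : ℕ) : ℕ := (2 * b - 2) * p ^ (2 * b - 1) * (p ^ 2 - 1)

lemma three_dvd_mul_sq_sub_one (p : ℕ) : 3 ∣ p * (p ^ 2 - 1) := by
  obtain rfl | hp := Nat.eq_zero_or_pos p
  · simp
  have key : ∀ x : ZMod 3, x * (x ^ 2 - 1) = 0 := by decide
  rw [← ZMod.natCast_eq_zero_iff, Nat.cast_mul, Nat.cast_sub (Nat.one_le_pow _ _ hp)]
  push_cast
  exact key p

lemma three_dvd_sigmaNumerator (b p : ℕ) : 3 ∣ sigmaNumerator b p := by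
  unfold sigmaNumerator
  obtain rfl | hb := Nat.eq_zero_or_pos b
  · simp
  rw [mul_assoc]
  exact (three_dvd_mul_sq_sub_one p |>.trans <|
    mul_dvd_mul_right (dvd_pow_self p (by omega)) _).mul_left _

lemma sixteen_dvd_sigmaNumerator (b p : ℕ) : 16 ∣ sigmaNumerator b p := by
  unfold sigmaNumerator
  obtain hb | hb := Nat.lt_or_ge b 2
  · simp [show 2 * b - 2 = 0 by omega]
  have h2 : 2 ∣ 2 * b - 2 := ⟨b - 1, by omega⟩
  rcases Nat.even_or_odd p with hp | hp
  · have h8 : 8 ∣ p ^ (2 * b - 1) := by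
      calc 8 = 2 ^ 3 := rfl
        _ ∣ p ^ 3 := pow_dvd_pow_of_dvd hp.two_dvd 3
        _ ∣ p ^ (2 * b - 1) := pow_dvd_pow p (by omega)
    exact (mul_dvd_mul h2 h8).mul_right _
  · rw [mul_right_comm]
    exact (mul_dvd_mul h2 (Nat.eight_dvd_sq_sub_one_of_odd hp)).mul_right _

lemma sigmaNumerator_mono {b b' p p' : ℕ} (hb : b ≤ b') (hp : p ≤ p') :
    sigmaNumerator b p ≤ sigmaNumerator b' p' := by
  unfold sigmaNumerator
  obtain rfl | hp0 := Nat.eq_zero_or_pos p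
  · simp
  gcongr; omega

lemma le_sigmaNumerator {b p : ℕ} (hp : p.Prime) (hb : 2 ≤ b) (hdvd : p ∣ b + 1) :
    384 ≤ sigmaNumerator b p := by
  obtain rfl | hp2 := eq_or_ne p 2
  · have hb3 : 3 ≤ b := by omega
    exact (by decide : 384 ≤ sigmaNumerator 3 2).trans (sigmaNumerator_mono hb3 le_rfl)
  · have hp3 : 3 ≤ p := by have := hp.two_le; omega
    exact (by decide : 384 ≤ sigmaNumerator 2 3).trans (sigmaNumerator_mono hb hp3)

theorem stmt_17 (p b : ℕ) (hp : p.Prime) (hb : 2 ≤ b) (hdvd : p ∣ b + 1) :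
    3 ∣ (2 * b - 2) * p ^ (2 * b - 1) * (p ^ 2 - 1) ∧
    0 < (2 * b - 2) * p ^ (2 * b - 1) * (p ^ 2 - 1) / 3 ∧
    16 ∣ (2 * b - 2) * p ^ (2 * b - 1) * (p ^ 2 - 1) / 3 ∧
    128 ≤ (2 * b - 2) * p ^ (2 * b - 1) * (p ^ 2 - 1) / 3 ∧
    (2 * 3 - 2) * 2 ^ (2 * 3 - 1) * (2 ^ 2 - 1) / 3 = 128 := by
  change 3 ∣ sigmaNumerator b p ∧ 0 < sigmaNumerator b p / 3 ∧ 16 ∣ sigmaNumerator b p / 3 ∧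
    128 ≤ sigmaNumerator b p / 3 ∧ sigmaNumerator 3 2 / 3 = 128
  have h48 : 3 * 16 ∣ sigmaNumerator b p := Nat.Coprime.mul_dvd_of_dvd_of_dvd (by norm_num)
    (three_dvd_sigmaNumerator b p) (sixteen_dvd_sigmaNumerator b p)
  have h128 : 128 ≤ sigmaNumerator b p / 3 :=
    (Nat.le_div_iff_mul_le three_pos).2 (le_sigmaNumerator hp hb hdvd)
  exact ⟨three_dvd_sigmaNumerator b p, by omega, Nat.dvd_div_of_mul_dvd h48, h128, by decide⟩
end
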